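/- Let X, Z be real n×n matrices satisfying the Lagrangian frame conditions (so X ± iZ are invertible over ℂ). Then: (i) for v ∈ ℂⁿ, (X − iZ)^{−1}(X + iZ)v = −v if and only if Xv = 0; (ii) if (X + iZ)(X − iZ)^{−1}v = −v, then w := (X − iZ)^{−1}v satisfies Xw = 0, and in that case for any real n×n matrix C one has ⟨(XᵗCX − ZᵗZ)w, w⟩_{ℂⁿ} = −‖Zw‖² ≤ 0. In particular, in the Dirichlet case the (−1)-eigenspace of W̃ = (X + iZ)(X − iZ)^{−1} corresponds to the kernel of X, and the crossing form matrix XᵗCX − ZᵗZ is negative semidefinite on this eigenspace. -/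

import Mathlib

/-!
Put `A = X - iZ` and `B = X + iZ`. The frame condition `XᵗZ = ZᵗX` gives `BᵗA = XᵗX + ZᵗZ`, so `A`
is invertible, and `A + B = 2X`. Hence `A⁻¹Bv = -v` means `(A + B)v = 0`, i.e. `Xv = 0`, and
`BA⁻¹v = -v` means the same for `w = A⁻¹v`. On `ker X` the term `XᵗCX` of the crossing form drops
out, leaving `-⟨Zw, Zw⟩`.
-/

open Complex Matrix
open scoped ComplexOrder

namespace Matrix

section NegOneEigenvector

variable {n R : Type*} [Fintype n] [DecidableEq n] [CommRing R]

theorem inv_mul_mulVec_eq_neg_iff {A B : Matrix n n R} (hA : IsUnit A) (v : n → R) :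
    (A⁻¹ * B) *ᵥ v = -v ↔ (A + B) *ᵥ v = 0 := by
  have hA' : IsUnit A.det := (isUnit_iff_isUnit_det A).1 hA
  rw [add_mulVec, add_eq_zero_iff_neg_eq, ← mulVec_neg, ← mulVec_mulVec]
  constructor
  · intro h
    rw [← h, mulVec_mulVec, mul_nonsing_inv A hA', one_mulVec]
  · intro h
    rw [← h, mulVec_mulVec, nonsing_inv_mul A hA', one_mulVec]

theorem mul_inv_mulVec_eq_neg_iff {A B : Matrix n n R} (hA : IsUnit A) (v : n → R) :
    (B * A⁻¹) *ᵥ v = -v ↔ (A + B) *ᵥ (A⁻¹ *ᵥ v) = 0 := by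
  have hA' : IsUnit A.det := (isUnit_iff_isUnit_det A).1 hA
  rw [add_mulVec, mulVec_mulVec, mul_nonsing_inv A hA', one_mulVec, mulVec_mulVec,
    add_eq_zero_iff_neg_eq, eq_comm]

end NegOneEigenvector

theorem dotProduct_mulVec_sub_conjTranspose_mul_self {n R : Type*} [Fintype n] [CommRing R]
    [StarRing R] {M X Z : Matrix n n R} {w : n → R} (hw : X *ᵥ w = 0) :
    star w ⬝ᵥ ((M * X - Zᴴ * Z) *ᵥ w) = -(star (Z *ᵥ w) ⬝ᵥ (Z *ᵥ w)) := by
  rw [sub_mulVec, ← mulVec_mulVec, hw, mulVec_zero, zero_sub, dotProduct_neg, ← mulVec_mulVec,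
    dotProduct_mulVec, star_mulVec]

theorem map_ofReal_mul {n : Type*} [Fintype n] (M N : Matrix n n ℝ) :
    (M * N).map ofReal = M.map ofReal * N.map ofReal :=
  Matrix.map_mul (f := ofRealHom)

theorem conjTranspose_map_ofReal {n : Type*} (Z : Matrix n n ℝ) :
    (Z.map ofReal)ᴴ = Zᵀ.map ofReal := by
  rw [← conjTranspose_eq_transpose_of_trivial, conjTranspose_map _ fun _ => (conj_ofReal _).symm]

section LagrangianFrame

variable {n : Type*} [Fintype n]

theorem sub_I_smul_add_add_I_smul_mulVec_eq_zero_iff (X Z : Matrix n n ℂ) (v : n → ℂ) :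
    ((X - I • Z) + (X + I • Z)) *ᵥ v = 0 ↔ X *ᵥ v = 0 := by
  rw [sub_add_add_cancel, ← two_smul ℂ, smul_mulVec, smul_eq_zero, or_iff_right two_ne_zero]

theorem transpose_add_I_smul_mul_sub_I_smul {X Z : Matrix n n ℂ} (hXZ : Xᵀ * Z = Zᵀ * X) :
    (X + I • Z)ᵀ * (X - I • Z) = Xᵀ * X + Zᵀ * Z := by
  rw [transpose_add, transpose_smul, add_mul, mul_sub, mul_sub, smul_mul_assoc, smul_mul_assoc,
    mul_smul_comm, mul_smul_comm, hXZ, smul_smul, I_mul_I, neg_one_smul]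
  abel

theorem isUnit_map_ofReal_sub_I_smul [DecidableEq n] {X Z : Matrix n n ℝ}
    (hXZ : Xᵀ * Z = Zᵀ * X) (hunit : IsUnit (Xᵀ * X + Zᵀ * Z)) :
    IsUnit (X.map ofReal - I • Z.map ofReal) := by
  have hXZc : (X.map ofReal)ᵀ * Z.map ofReal = (Z.map ofReal)ᵀ * X.map ofReal := by
    rw [← transpose_map, ← transpose_map, ← map_ofReal_mul, ← map_ofReal_mul, hXZ]
  have h : IsUnit ((X.map ofReal + I • Z.map ofReal)ᵀ * (X.map ofReal - I • Z.map ofReal)) := by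
    rw [transpose_add_I_smul_mul_sub_I_smul hXZc, ← transpose_map, ← transpose_map,
      ← map_ofReal_mul, ← map_ofReal_mul, ← Matrix.map_add _ ofReal_add]
    exact hunit.map ofRealHom.mapMatrix
  exact isUnit_of_mul_isUnit_right h

end LagrangianFrame

end Matrix

/-- Dirichlet-case crossing analysis: for a Lagrangian frame `(X; Z)`,
(i) `(X − iZ)⁻¹(X + iZ)v = −v` iff `Xv = 0`; (ii) if `(X + iZ)(X − iZ)⁻¹v = −v`, then
`w = (X − iZ)⁻¹v` satisfies `Xw = 0`, and for any real matrix `C` the crossing-form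
quantity `⟨(XᵗCX − ZᵗZ)w, w⟩` equals `−‖Zw‖² ≤ 0`. -/
theorem dirichlet_crossing_form (n : ℕ) (X Z : Matrix (Fin n) (Fin n) ℝ)
    (hfr : Xᵀ * Z = Zᵀ * X) (hinv : IsUnit (Xᵀ * X + Zᵀ * Z))
    (Xc Zc : Matrix (Fin n) (Fin n) ℂ)
    (hXc : Xc = X.map Complex.ofReal) (hZc : Zc = Z.map Complex.ofReal) :
    (∀ v : Fin n → ℂ,
      ((Xc - Complex.I • Zc)⁻¹ * (Xc + Complex.I • Zc)) *ᵥ v = -v ↔ Xc *ᵥ v = 0) ∧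
    (∀ v : Fin n → ℂ,
      ((Xc + Complex.I • Zc) * (Xc - Complex.I • Zc)⁻¹) *ᵥ v = -v →
      Xc *ᵥ ((Xc - Complex.I • Zc)⁻¹ *ᵥ v) = 0 ∧
      ∀ C : Matrix (Fin n) (Fin n) ℝ,
        star ((Xc - Complex.I • Zc)⁻¹ *ᵥ v) ⬝ᵥ
            (((Xᵀ * C * X - Zᵀ * Z).map Complex.ofReal) *ᵥ
              ((Xc - Complex.I • Zc)⁻¹ *ᵥ v)) =
          -(star (Zc *ᵥ ((Xc - Complex.I • Zc)⁻¹ *ᵥ v)) ⬝ᵥ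
              (Zc *ᵥ ((Xc - Complex.I • Zc)⁻¹ *ᵥ v))) ∧
        (star ((Xc - Complex.I • Zc)⁻¹ *ᵥ v) ⬝ᵥ
            (((Xᵀ * C * X - Zᵀ * Z).map Complex.ofReal) *ᵥ
              ((Xc - Complex.I • Zc)⁻¹ *ᵥ v))).im = 0 ∧
        (star ((Xc - Complex.I • Zc)⁻¹ *ᵥ v) ⬝ᵥ
            (((Xᵀ * C * X - Zᵀ * Z).map Complex.ofReal) *ᵥ
              ((Xc - Complex.I • Zc)⁻¹ *ᵥ v))).re ≤ 0) := by
  subst hXc hZc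
  have hA := isUnit_map_ofReal_sub_I_smul hfr hinv
  refine ⟨fun v => ?_, fun v hv => ?_⟩
  · rw [inv_mul_mulVec_eq_neg_iff hA, sub_I_smul_add_add_I_smul_mulVec_eq_zero_iff]
  set w := (X.map ofReal - I • Z.map ofReal)⁻¹ *ᵥ v
  have hXw : X.map ofReal *ᵥ w = 0 :=
    (sub_I_smul_add_add_I_smul_mulVec_eq_zero_iff _ _ _).1 ((mul_inv_mulVec_eq_neg_iff hA v).1 hv)
  refine ⟨hXw, fun C => ?_⟩
  have hcross : (Xᵀ * C * X - Zᵀ * Z).map ofReal =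
      (Xᵀ * C).map ofReal * X.map ofReal - (Z.map ofReal)ᴴ * Z.map ofReal := by
    rw [Matrix.map_sub _ ofReal_sub, map_ofReal_mul _ X, map_ofReal_mul Zᵀ, conjTranspose_map_ofReal]
  rw [hcross, dotProduct_mulVec_sub_conjTranspose_mul_self hXw]
  have hnonpos := neg_nonpos.2 (dotProduct_star_self_nonneg (Z.map ofReal *ᵥ w))
  exact ⟨rfl, (le_def.1 hnonpos).2, (le_def.1 hnonpos).1⟩
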